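/- Lemma 3 (convexity of the value function): in the strictly adaptive log-Gaussian exploration dynamic program, each optimal value function U_i(d_i) is a convex function of the vector of observed measurements z_{x_{0:i}}, for i = 0,…,t. -/
import Mathlib


open Matrix MeasureTheory Real

/-- Standard normal density. -/
noncomputable def stdGauss (x : ℝ) : ℝ :=
  (Real.sqrt (2 * Real.pi))⁻¹ * Real.exp (-(x ^ 2) / 2)

lemma stdGauss_nonneg (x : ℝ) : 0 ≤ stdGauss x := by
  unfold stdGauss; positivity

/-- a finite sup of convex functions is convex. -/
lemma convexOn_sup' {α : Type*} {n : ℕ} (s : Finset α) (hs : s.Nonempty)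
    (f : α → (Fin n → ℝ) → ℝ) (hf : ∀ a ∈ s, ConvexOn ℝ Set.univ (f a)) :
    ConvexOn ℝ Set.univ (fun z => s.sup' hs fun a => f a z) := by
  refine ⟨convex_univ, ?_⟩
  intro x _ y _ a b ha hb hab
  simp only [smul_eq_mul]
  rw [Finset.sup'_le_iff]
  intro c hc
  calc f c (a • x + b • y) ≤ a * f c x + b * f c y := by
        have := (hf c hc).2 (Set.mem_univ x) (Set.mem_univ y) ha hb hab
        simpa using this
    _ ≤ a * (s.sup' hs fun d => f d x) + b * (s.sup' hs fun d => f d y) :=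
        add_le_add
          (mul_le_mul_of_nonneg_left (Finset.le_sup' (fun d => f d x) hc) ha)
          (mul_le_mul_of_nonneg_left (Finset.le_sup' (fun d => f d y) hc) hb)

lemma snoc_comb {n : ℕ} (z₁ z₂ : Fin n → ℝ) (v₁ v₂ a b : ℝ) :
    (Fin.snoc (a • z₁ + b • z₂) (a * v₁ + b * v₂) : Fin (n + 1) → ℝ) =
      a • (Fin.snoc z₁ v₁ : Fin (n + 1) → ℝ) + b • (Fin.snoc z₂ v₂ : Fin (n + 1) → ℝ) := by
  funext j
  refine Fin.lastCases ?_ ?_ j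
  · simp
  · intro j; simp

/-- Lemma 3 (convexity of the value function).  Strictly adaptive log-Gaussian
exploration dynamic program: at stage `i` the data values are `z : Fin (k+i) → ℝ`
(`k` prior observations).  For action `a`, the (Gaussian) posterior mean
`μpost i a z` is affine in `z`, the posterior standard deviation `σpost i a` is
constant in the values (it depends only on the locations), and the stagewise reward is
`H[Y_{x_{i+1}}|d_i] = log √(2πe σ²) + μpost i a z`.  One new measurement
`Z_{x_{i+1}} ~ N(μpost i a z, σ²)` is appended at each stage; the expectation is
written via the standard normal density `stdGauss`.  Then each optimal value function
`U i` is convex in the vector of observed measurements, for `i = 0,…,t`. -/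
theorem value_function_convex
    {α : Type*} (t k : ℕ)
    (A : ℕ → Finset α) (hA : ∀ i, (A i).Nonempty)
    (μpost : (i : ℕ) → α → (Fin (k + i) → ℝ) → ℝ)
    (σpost : ℕ → α → ℝ)
    (haff : ∀ i a, ∃ (c : ℝ) (w : Fin (k + i) → ℝ), ∀ z, μpost i a z = c + w ⬝ᵥ z)
    (Hent : (i : ℕ) → α → (Fin (k + i) → ℝ) → ℝ)
    (hHent : ∀ i a z, Hent i a z =
      Real.log (Real.sqrt (2 * Real.pi * Real.exp 1 * (σpost i a) ^ 2)) + μpost i a z)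
    (U : (i : ℕ) → (Fin (k + i) → ℝ) → ℝ)
    (hUt : ∀ z, U t z = (A t).sup' (hA t) fun a => Hent t a z)
    (hU : ∀ i < t, ∀ z, U i z = (A i).sup' (hA i) fun a =>
      Hent i a z +
        ∫ x : ℝ, stdGauss x * U (i + 1) (Fin.snoc z (μpost i a z + σpost i a * x)))
    -- integrability of all the expectations involved:
    (hint : ∀ i < t, ∀ a z, Integrable fun x : ℝ =>
      stdGauss x * U (i + 1) (Fin.snoc z (μpost i a z + σpost i a * x))) :
    ∀ i ≤ t, ConvexOn ℝ Set.univ (U i) := by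
  -- affine combination property of μpost
  have hμ : ∀ i a (z₁ z₂ : Fin (k + i) → ℝ) (p q : ℝ), p + q = 1 →
      μpost i a (p • z₁ + q • z₂) = p * μpost i a z₁ + q * μpost i a z₂ := by
    intro i a z₁ z₂ p q hpq
    obtain ⟨c, w, hw⟩ := haff i a
    simp only [hw, dotProduct_add, dotProduct_smul, smul_eq_mul]
    linear_combination (-c) * hpq
  -- Hent is convex in z
  have hHconv : ∀ i a, ConvexOn ℝ Set.univ (Hent i a) := by
    intro i a
    refine ⟨convex_univ, ?_⟩
    intro z₁ _ z₂ _ p q hp hq hpq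
    simp only [smul_eq_mul, hHent, hμ i a z₁ z₂ p q hpq]
    have : p * Real.log (Real.sqrt (2 * Real.pi * Real.exp 1 * (σpost i a) ^ 2))
        + q * Real.log (Real.sqrt (2 * Real.pi * Real.exp 1 * (σpost i a) ^ 2))
        = Real.log (Real.sqrt (2 * Real.pi * Real.exp 1 * (σpost i a) ^ 2)) := by
      rw [← add_mul, hpq, one_mul]
    linarith
  -- backward induction on `t - i`
  suffices h : ∀ n, ∀ i, i ≤ t → t - i = n → ConvexOn ℝ Set.univ (U i) by
    intro i hi; exact h (t - i) i hi rfl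
  intro n
  induction n with
  | zero =>
    intro i hi hn
    have hit : i = t := by omega
    have hU' : U i = fun z => (A i).sup' (hA i) fun a => Hent i a z := by
      cases hit; exact funext hUt
    rw [hU']
    exact convexOn_sup' _ _ _ fun a _ => hHconv i a
  | succ n ih =>
    intro i hi hn
    have hlt : i < t := by omega
    have hc : ConvexOn ℝ Set.univ (U (i + 1)) := ih (i + 1) (by omega) (by omega)
    have hU' : U i = fun z => (A i).sup' (hA i) fun a =>
        Hent i a z +
          ∫ x : ℝ, stdGauss x * U (i + 1) (Fin.snoc z (μpost i a z + σpost i a * x)) :=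
      funext (hU i hlt)
    rw [hU']
    refine convexOn_sup' _ _ _ fun a _ => (hHconv i a).add ?_
    -- convexity of the expectation term
    refine ⟨convex_univ, ?_⟩
    intro z₁ _ z₂ _ p q hp hq hpq
    simp only [smul_eq_mul]
    have hInt1 := hint i hlt a z₁
    have hInt2 := hint i hlt a z₂
    have hIntc := hint i hlt a (p • z₁ + q • z₂)
    have hptw : ∀ x : ℝ,
        stdGauss x * U (i + 1)
          (Fin.snoc (p • z₁ + q • z₂) (μpost i a (p • z₁ + q • z₂) + σpost i a * x))
        ≤ p * (stdGauss x * U (i + 1) (Fin.snoc z₁ (μpost i a z₁ + σpost i a * x)))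
          + q * (stdGauss x * U (i + 1) (Fin.snoc z₂ (μpost i a z₂ + σpost i a * x))) := by
      intro x
      have hv : μpost i a (p • z₁ + q • z₂) + σpost i a * x
          = p * (μpost i a z₁ + σpost i a * x) + q * (μpost i a z₂ + σpost i a * x) := by
        rw [hμ i a z₁ z₂ p q hpq]; linear_combination (-(σpost i a * x)) * hpq
      have hkey : (Fin.snoc (p • z₁ + q • z₂)
            (μpost i a (p • z₁ + q • z₂) + σpost i a * x) : Fin (k + i + 1) → ℝ)
          = p • (Fin.snoc z₁ (μpost i a z₁ + σpost i a * x) : Fin (k + i + 1) → ℝ)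
            + q • (Fin.snoc z₂ (μpost i a z₂ + σpost i a * x) : Fin (k + i + 1) → ℝ) := by
        rw [hv]; exact snoc_comb _ _ _ _ _ _
      have hUc := hc.2 (Set.mem_univ (Fin.snoc z₁ (μpost i a z₁ + σpost i a * x)))
        (Set.mem_univ (Fin.snoc z₂ (μpost i a z₂ + σpost i a * x))) hp hq hpq
      simp only [smul_eq_mul] at hUc
      calc stdGauss x * U (i + 1)
            (Fin.snoc (p • z₁ + q • z₂) (μpost i a (p • z₁ + q • z₂) + σpost i a * x))
          ≤ stdGauss x * (p * U (i + 1) (Fin.snoc z₁ (μpost i a z₁ + σpost i a * x))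
              + q * U (i + 1) (Fin.snoc z₂ (μpost i a z₂ + σpost i a * x))) := by
            rw [hkey]
            exact mul_le_mul_of_nonneg_left hUc (stdGauss_nonneg x)
        _ = p * (stdGauss x * U (i + 1) (Fin.snoc z₁ (μpost i a z₁ + σpost i a * x)))
            + q * (stdGauss x * U (i + 1) (Fin.snoc z₂ (μpost i a z₂ + σpost i a * x))) := by
            ring
    calc (∫ x : ℝ, stdGauss x * U (i + 1)
            (Fin.snoc (p • z₁ + q • z₂) (μpost i a (p • z₁ + q • z₂) + σpost i a * x)))
        ≤ ∫ x : ℝ, (p * (stdGauss x * U (i + 1) (Fin.snoc z₁ (μpost i a z₁ + σpost i a * x)))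
            + q * (stdGauss x * U (i + 1) (Fin.snoc z₂ (μpost i a z₂ + σpost i a * x)))) :=
          integral_mono hIntc ((hInt1.const_mul p).add (hInt2.const_mul q)) hptw
      _ = p * (∫ x : ℝ, stdGauss x * U (i + 1) (Fin.snoc z₁ (μpost i a z₁ + σpost i a * x)))
          + q * (∫ x : ℝ, stdGauss x * U (i + 1) (Fin.snoc z₂ (μpost i a z₂ + σpost i a * x))) := by
          rw [integral_add (hInt1.const_mul p) (hInt2.const_mul q),
            integral_const_mul, integral_const_mul]
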